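/- Let (G, Λ) be a self-similar action of a groupoid on a row-finite k-graph with no sources, C = Λ ⋈ G, A a C*-algebra, S: C → A satisfying S_c*S_c = S_{s(c)} and S_{c1}S_{c2} = ω(c1,c2)S_{c1c2} for central-unitary-valued ω. If S satisfies S_μ S_μ* S_ν S_ν* = Σ_{λ ∈ MCE(μ,ν)} S_λ S_λ* for all μ, ν ∈ Λ, then for all c_1, c_2 ∈ C and any finite independent F with c_1C ∩ c_2C = FC, S_{c_1}S_{c_1}* S_{c_2}S_{c_2}* = ∨_{c ∈ F} S_c S_c*. In particular, for c = λg with λ ∈ Λ, g ∈ G, one has cC = λC and S_c S_c* = S_λ S_λ*. -/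

import Mathlib

/-- A small category, modelled algebraically: a set of morphisms with source and
range maps and a (total, but only meaningful on composable pairs) composition. -/
structure CatStruct (C : Type*) where
  src : C → C
  rng : C → C
  comp : C → C → C
  src_src : ∀ a, src (src a) = src a
  rng_src : ∀ a, rng (src a) = src a
  src_rng : ∀ a, src (rng a) = rng a
  rng_rng : ∀ a, rng (rng a) = rng a
  comp_src : ∀ a, comp a (src a) = a
  rng_comp_self : ∀ a, comp (rng a) a = a
  src_comp : ∀ a b, src a = rng b → src (comp a b) = src b
  rng_comp : ∀ a b, src a = rng b → rng (comp a b) = rng a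
  assoc : ∀ a b c, src a = rng b → src b = rng c →
    comp (comp a b) c = comp a (comp b c)

namespace CatStruct

variable {C : Type*}

/-- The principal right ideal `aC`. -/
def ideal (𝒞 : CatStruct C) (a : C) : Set C :=
  {x | ∃ c, 𝒞.src a = 𝒞.rng c ∧ x = 𝒞.comp a c}

/-- The principal right ideal of `a` relative to a subcategory `D`. -/
def idealIn (𝒞 : CatStruct C) (D : Set C) (a : C) : Set C :=
  {x | ∃ c ∈ D, 𝒞.src a = 𝒞.rng c ∧ x = 𝒞.comp a c}

def LeftCancellative (𝒞 : CatStruct C) : Prop :=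
  ∀ a b c, 𝒞.src a = 𝒞.rng b → 𝒞.src a = 𝒞.rng c →
    𝒞.comp a b = 𝒞.comp a c → b = c

def FinitelyAligned (𝒞 : CatStruct C) : Prop :=
  ∀ a b : C, ∃ F : Finset C, 𝒞.ideal a ∩ 𝒞.ideal b = ⋃ c ∈ F, 𝒞.ideal c

def IsInvertible (𝒞 : CatStruct C) (c : C) : Prop :=
  ∃ c', 𝒞.src c' = 𝒞.rng c ∧ 𝒞.rng c' = 𝒞.src c ∧
    𝒞.comp c c' = 𝒞.rng c ∧ 𝒞.comp c' c = 𝒞.src c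

/-- `a ~ b` : there is an invertible `c` with `a = bc`. -/
def equivR (𝒞 : CatStruct C) (a b : C) : Prop :=
  ∃ c, 𝒞.IsInvertible c ∧ 𝒞.src b = 𝒞.rng c ∧ a = 𝒞.comp b c

def Independent (𝒞 : CatStruct C) (A : Set C) : Prop :=
  ∀ a ∈ A, ∀ a' ∈ A, a ≠ a' → a ∉ 𝒞.ideal a'

end CatStruct
/-- Join of commuting projections by inclusion–exclusion. -/
noncomputable def projJoin {ι : Type*} {A : Type*} [Ring A] (p : ι → A)
    (hcomm : ∀ i j, Commute (p i) (p j)) (F : Finset ι) : A :=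
  ∑ G ∈ F.powerset.filter (fun G => G.Nonempty),
    (-1 : A) ^ (G.card - 1) * G.noncommProd p (fun x _ y _ _ => hcomm x y)

/-! Write `c = λ g` with `λ ∈ Λ` and `g ∈ G`. As `g` is invertible, `cC = λC`, and the range
projection `P_c = S_c S_c*` depends only on the ideal `cC`: from `P_{ab} = S_a P_b S_a*` and
`S_a* S_a = S_{s(a)}` one gets `P_a P_b = P_b` whenever `b ∈ aC`, and self-adjointness turns
mutual containment into equality. This reduces the range relation to `μ, ν ∈ Λ`, where (TCK3)
writes `P_μ P_ν` as the sum over `MCE(μ, ν)`. The unique factorisation properties show that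
`MCE(μ, ν)` is an independent set generating `μC ∩ νC`; two independent sets generating the same
ideal correspond bijectively through `cC = λC`. Distinct paths of equal degree have orthogonal
range projections, so the projections indexed by `F` are pairwise orthogonal and their join is
their sum. -/

namespace CatStruct

variable {C : Type*} {𝒞 : CatStruct C}

theorem mem_ideal_self (𝒞 : CatStruct C) (a : C) : a ∈ 𝒞.ideal a :=
  ⟨𝒞.src a, (𝒞.rng_src a).symm, (𝒞.comp_src a).symm⟩

theorem ideal_subset_of_mem {a b : C} (h : b ∈ 𝒞.ideal a) : 𝒞.ideal b ⊆ 𝒞.ideal a := by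
  obtain ⟨c, hac, rfl⟩ := h
  rintro x ⟨e, he, rfl⟩
  rw [𝒞.src_comp a c hac] at he
  exact ⟨𝒞.comp c e, by rw [𝒞.rng_comp c e he, hac], 𝒞.assoc a c e hac he⟩

theorem ideal_eq_of_mem_of_mem {a b : C} (hb : b ∈ 𝒞.ideal a) (ha : a ∈ 𝒞.ideal b) :
    𝒞.ideal a = 𝒞.ideal b :=
  (ideal_subset_of_mem ha).antisymm (ideal_subset_of_mem hb)

theorem ideal_comp_of_isInvertible {a g : C} (hg : 𝒞.IsInvertible g)
    (hag : 𝒞.src a = 𝒞.rng g) : 𝒞.ideal (𝒞.comp a g) = 𝒞.ideal a := by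
  obtain ⟨g', -, hg'r, hgg', -⟩ := hg
  refine ideal_eq_of_mem_of_mem ⟨g', ?_, ?_⟩ ⟨g, hag, rfl⟩
  · rw [𝒞.src_comp a g hag, hg'r]
  · rw [𝒞.assoc a g g' hag hg'r.symm, hgg', ← hag, 𝒞.comp_src]

theorem Independent.injOn_ideal {F : Set C} (hF : 𝒞.Independent F) : F.InjOn 𝒞.ideal := by
  intro a ha b hb hab
  by_contra hne
  exact hF a ha b hb hne (hab ▸ 𝒞.mem_ideal_self a)

theorem Independent.exists_ideal_eq {F M : Set C} (hF : 𝒞.Independent F)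
    (hFM : ⋃ c ∈ F, 𝒞.ideal c = ⋃ m ∈ M, 𝒞.ideal m) {c : C} (hc : c ∈ F) :
    ∃ m ∈ M, 𝒞.ideal c = 𝒞.ideal m := by
  have hcM : c ∈ ⋃ m ∈ M, 𝒞.ideal m := hFM ▸ Set.mem_biUnion hc (𝒞.mem_ideal_self c)
  obtain ⟨m, hm, hcm⟩ := Set.mem_iUnion₂.mp hcM
  have hmF : m ∈ ⋃ c ∈ F, 𝒞.ideal c := hFM ▸ Set.mem_biUnion hm (𝒞.mem_ideal_self m)
  obtain ⟨c', hc', hmc'⟩ := Set.mem_iUnion₂.mp hmF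
  -- `c ∈ mC ⊆ c'C`, so independence forces `c' = c`
  obtain rfl : c = c' := by
    by_contra hne
    exact hF c hc c' hc' hne (ideal_subset_of_mem hmc' hcm)
  exact ⟨m, hm, ideal_eq_of_mem_of_mem hmc' hcm⟩

theorem Independent.sum_eq_sum {β : Type*} [AddCommMonoid β] {F M : Finset C}
    (hF : 𝒞.Independent F) (hM : 𝒞.Independent M)
    (hFM : ⋃ c ∈ (F : Set C), 𝒞.ideal c = ⋃ m ∈ (M : Set C), 𝒞.ideal m) {f : C → β}
    (hf : ∀ a b, 𝒞.ideal a = 𝒞.ideal b → f a = f b) :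
    ∑ c ∈ F, f c = ∑ m ∈ M, f m := by
  choose φ hφM hφ using fun c (hc : c ∈ F) => hF.exists_ideal_eq hFM hc
  refine Finset.sum_bij φ hφM (fun a ha b hb h => hF.injOn_ideal ha hb ?_) (fun m hm => ?_)
    (fun c hc => hf _ _ (hφ c hc))
  · rw [hφ a ha, hφ b hb, h]
  · obtain ⟨c, hc, hmc⟩ := hM.exists_ideal_eq hFM.symm hm
    exact ⟨c, hc, hM.injOn_ideal (hφM c hc) hm (by rw [← hφ c hc, hmc])⟩

end CatStruct

theorem Finset.noncommProd_eq_zero_of_mul_eq_zero {ι R : Type*} [MonoidWithZero R]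
    {p : ι → R} {G : Finset ι} (hcomm : (G : Set ι).Pairwise (Function.onFun Commute p)) {a b : ι}
    (ha : a ∈ G) (hb : b ∈ G) (hab : a ≠ b) (h : p a * p b = 0) : G.noncommProd p hcomm = 0 := by
  classical
  have hb' : b ∈ G.erase a := Finset.mem_erase.mpr ⟨hab.symm, hb⟩
  have e₁ := Finset.mul_noncommProd_erase G ha p hcomm
  have e₂ := Finset.mul_noncommProd_erase (G.erase a) hb' p
    (hcomm.mono (Finset.coe_subset.mpr (G.erase_subset a)))
  rw [← e₁, ← e₂, ← mul_assoc, h, zero_mul]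

theorem projJoin_eq_sum {ι A : Type*} [Ring A] (p : ι → A)
    (hcomm : ∀ i j, Commute (p i) (p j)) (F : Finset ι)
    (horth : ∀ i ∈ F, ∀ j ∈ F, i ≠ j → p i * p j = 0) :
    projJoin p hcomm F = ∑ i ∈ F, p i := by
  classical
  have hsingletons : F.powersetCard 1 ⊆ F.powerset.filter (fun G => G.Nonempty) := by
    intro G hG
    rw [Finset.mem_powersetCard] at hG
    exact Finset.mem_filter.mpr ⟨Finset.mem_powerset.mpr hG.1, Finset.card_pos.mp (by omega)⟩
  -- only singletons survive: a product over two or more orthogonal projections vanishes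
  have hvanish : ∀ G ∈ F.powerset.filter (fun G => G.Nonempty), G ∉ F.powersetCard 1 →
      (-1 : A) ^ (G.card - 1) * G.noncommProd p (fun x _ y _ _ => hcomm x y) = 0 := by
    intro G hG hG1
    rw [Finset.mem_filter, Finset.mem_powerset] at hG
    rw [Finset.mem_powersetCard] at hG1
    have h2 : 1 < G.card := by
      have := Finset.card_pos.mpr hG.2
      by_contra; exact hG1 ⟨hG.1, by omega⟩
    obtain ⟨a, ha, b, hb, hab⟩ := Finset.one_lt_card.mp h2
    have hzero : G.noncommProd p (fun x _ y _ _ => hcomm x y) = 0 :=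
      Finset.noncommProd_eq_zero_of_mul_eq_zero _ ha hb hab (horth a (hG.1 ha) b (hG.1 hb) hab)
    rw [hzero, mul_zero]
  rw [projJoin, ← Finset.sum_subset hsingletons hvanish, Finset.powersetCard_one, Finset.sum_map]
  simp

theorem mul_eq_self_of_mul_idempotent {M : Type*} [Monoid M] {s e u v : M}
    (he : IsIdempotentElem e) (hvu : v * u = 1) (h : s * e = u * s) : s * e = s := by
  have hus : u * s = u * (u * s) := by
    calc u * s = s * e * e := by rw [mul_assoc, he.eq, h]
      _ = u * (u * s) := by rw [h, mul_assoc, h]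
  have hs : s = u * s := by
    calc s = v * (u * s) := by rw [← mul_assoc, hvu, one_mul]
      _ = v * (u * (u * s)) := by rw [← hus]
      _ = u * s := by rw [← mul_assoc, hvu, one_mul]
  rw [h, ← hs]

section TwistedRep

variable {C A : Type*}

def rangeProj [Mul A] [Star A] (S : C → A) (c : C) : A := S c * star (S c)

variable [Monoid A] [StarMul A]

structure IsTwistedRep (𝒞 : CatStruct C) (S : C → A) (ω : C → C → A) : Prop where
  star_mul_self : ∀ c, star (S c) * S c = S (𝒞.src c)
  commute_cocycle : ∀ c₁ c₂ x, Commute (ω c₁ c₂) x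
  star_cocycle_mul_cocycle : ∀ c₁ c₂, star (ω c₁ c₂) * ω c₁ c₂ = 1
  mul_eq : ∀ c₁ c₂, 𝒞.src c₁ = 𝒞.rng c₂ → S c₁ * S c₂ = ω c₁ c₂ * S (𝒞.comp c₁ c₂)

namespace IsTwistedRep

variable {𝒞 : CatStruct C} {S : C → A} {ω : C → C → A}

theorem isIdempotentElem_of_src_eq (hS : IsTwistedRep 𝒞 S ω) {v : C} (hv : 𝒞.src v = v) :
    IsIdempotentElem (S v) := by
  have h : star (S v) * S v = S v := by rw [hS.star_mul_self, hv]
  have hstar : star (S v) = S v := by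
    have h' := congrArg star h
    rw [star_mul, star_star] at h'
    exact h'.symm.trans h
  calc S v * S v = star (S v) * S v := by rw [hstar]
    _ = S v := h

theorem mul_src (hS : IsTwistedRep 𝒞 S ω) (x : C) : S x * S (𝒞.src x) = S x := by
  refine mul_eq_self_of_mul_idempotent (hS.isIdempotentElem_of_src_eq (𝒞.src_src x))
    (hS.star_cocycle_mul_cocycle x (𝒞.src x)) ?_
  rw [hS.mul_eq x _ (𝒞.rng_src x).symm, 𝒞.comp_src]

theorem rangeProj_comp (hS : IsTwistedRep 𝒞 S ω) {a b : C} (hab : 𝒞.src a = 𝒞.rng b) :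
    rangeProj S (𝒞.comp a b) = S a * rangeProj S b * star (S a) := by
  set u := ω a b
  have hSab : S (𝒞.comp a b) = star u * (S a * S b) := by
    rw [hS.mul_eq a b hab, ← mul_assoc, hS.star_cocycle_mul_cocycle, one_mul]
  -- the cocycle is central, so `star u` and `u` meet and cancel
  calc rangeProj S (𝒞.comp a b) = star u * (S a * S b * star (S a * S b) * u) := by
        rw [rangeProj, hSab, star_mul, star_star]; simp only [mul_assoc]
    _ = S a * rangeProj S b * star (S a) := by
        rw [← (hS.commute_cocycle a b _).eq, ← mul_assoc, hS.star_cocycle_mul_cocycle, one_mul,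
          rangeProj, star_mul]
        simp only [mul_assoc]

theorem rangeProj_mul_of_mem_ideal (hS : IsTwistedRep 𝒞 S ω) {a b : C} (h : b ∈ 𝒞.ideal a) :
    rangeProj S a * rangeProj S b = rangeProj S b := by
  obtain ⟨c, hac, rfl⟩ := h
  calc rangeProj S a * rangeProj S (𝒞.comp a c)
        = S a * (star (S a) * S a) * rangeProj S c * star (S a) := by
          rw [hS.rangeProj_comp hac, rangeProj]; simp only [mul_assoc]
    _ = rangeProj S (𝒞.comp a c) := by
          rw [hS.star_mul_self, hS.mul_src, hS.rangeProj_comp hac]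

theorem rangeProj_eq_of_ideal_eq (hS : IsTwistedRep 𝒞 S ω) {a b : C}
    (h : 𝒞.ideal a = 𝒞.ideal b) : rangeProj S a = rangeProj S b := by
  have hab := hS.rangeProj_mul_of_mem_ideal (h ▸ 𝒞.mem_ideal_self b)
  have hba := hS.rangeProj_mul_of_mem_ideal (h ▸ 𝒞.mem_ideal_self a)
  -- range projections are self-adjoint, so `P a * P b = P b` also gives `P b * P a = P b`
  have hstar := congrArg star hab
  simp only [rangeProj, star_mul, star_star, ← mul_assoc] at hstar hba
  simp only [rangeProj, ← hba, hstar]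

end IsTwistedRep

end TwistedRep

namespace CatStruct

variable {C ι : Type*} {𝒞 : CatStruct C}

structure IsKGraph (𝒞 : CatStruct C) (Λ : Set C) (d : C → ι → ℕ) : Prop where
  src_mem : ∀ x, 𝒞.src x ∈ Λ
  comp_mem : ∀ a ∈ Λ, ∀ b ∈ Λ, 𝒞.src a = 𝒞.rng b → 𝒞.comp a b ∈ Λ
  degree_comp : ∀ a ∈ Λ, ∀ b ∈ Λ, 𝒞.src a = 𝒞.rng b → d (𝒞.comp a b) = d a + d b
  factorization : ∀ lam ∈ Λ, ∀ m n : ι → ℕ, d lam = m + n →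
    ∃! p : C × C, p.1 ∈ Λ ∧ p.2 ∈ Λ ∧ 𝒞.src p.1 = 𝒞.rng p.2 ∧
      lam = 𝒞.comp p.1 p.2 ∧ d p.1 = m ∧ d p.2 = n

def minimalCommonExtensions (𝒞 : CatStruct C) (Λ : Set C) (d : C → ι → ℕ) (μ ν : C) :
    Set C :=
  {lam | lam ∈ Λ ∧ lam ∈ 𝒞.idealIn Λ μ ∧ lam ∈ 𝒞.idealIn Λ ν ∧
    d lam = fun i => max (d μ i) (d ν i)}

namespace IsKGraph

variable {Λ : Set C} {d : C → ι → ℕ}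

theorem left_eq_of_comp_eq (hΛ : 𝒞.IsKGraph Λ d) {a b a' b' : C} (ha : a ∈ Λ) (hb : b ∈ Λ)
    (ha' : a' ∈ Λ) (hb' : b' ∈ Λ) (hab : 𝒞.src a = 𝒞.rng b) (hab' : 𝒞.src a' = 𝒞.rng b')
    (heq : 𝒞.comp a b = 𝒞.comp a' b') (hd : d a = d a') : a = a' := by
  have hdab := hΛ.degree_comp a ha b hb hab
  have hdb : d b' = d b := by
    rw [heq, hΛ.degree_comp a' ha' b' hb' hab', hd] at hdab
    exact add_left_cancel hdab
  obtain ⟨_, _, huniq⟩ := hΛ.factorization _ (hΛ.comp_mem a ha b hb hab) _ _ hdab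
  exact congrArg Prod.fst ((huniq (a, b) ⟨ha, hb, hab, rfl, rfl, rfl⟩).trans
    (huniq (a', b') ⟨ha', hb', hab', heq, hd.symm, hdb⟩).symm)

theorem exists_comp_of_le (hΛ : 𝒞.IsKGraph Λ d) {lam : C} (hlam : lam ∈ Λ) {m : ι → ℕ}
    (hm : m ≤ d lam) : ∃ a ∈ Λ, ∃ b ∈ Λ, 𝒞.src a = 𝒞.rng b ∧ lam = 𝒞.comp a b ∧ d a = m := by
  obtain ⟨⟨a, b⟩, ⟨ha, hb, hab, hlam_eq, hda, -⟩, -⟩ :=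
    hΛ.factorization lam hlam m (d lam - m) (add_tsub_cancel_of_le hm).symm
  exact ⟨a, ha, b, hb, hab, hlam_eq, hda⟩

theorem eq_of_mem_idealIn_of_degree_eq (hΛ : 𝒞.IsKGraph Λ d) {lam rho : C} (hlam : lam ∈ Λ)
    (h : rho ∈ 𝒞.idealIn Λ lam) (hd : d rho = d lam) : rho = lam := by
  obtain ⟨a, ha, hlama, rfl⟩ := h
  refine (hΛ.left_eq_of_comp_eq hlam ha (hΛ.comp_mem lam hlam a ha hlama) (hΛ.src_mem _) hlama
    (𝒞.rng_src _).symm (𝒞.comp_src _).symm hd.symm).symm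

theorem mem_idealIn_of_comp_eq_comp (hΛ : 𝒞.IsKGraph Λ d) {μ α lam τ : C} (hμ : μ ∈ Λ)
    (hα : α ∈ Λ) (hlam : lam ∈ Λ) (hτ : τ ∈ Λ) (hμα : 𝒞.src μ = 𝒞.rng α)
    (hlamτ : 𝒞.src lam = 𝒞.rng τ) (heq : 𝒞.comp μ α = 𝒞.comp lam τ) (hle : d μ ≤ d lam) :
    lam ∈ 𝒞.idealIn Λ μ := by
  obtain ⟨μ', hμ', α', hα', hμα', rfl, hd⟩ := hΛ.exists_comp_of_le hlam hle
  rw [𝒞.src_comp μ' α' hμα'] at hlamτ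
  have hμ'_eq : μ = μ' := by
    refine hΛ.left_eq_of_comp_eq hμ hα hμ' (hΛ.comp_mem α' hα' τ hτ hlamτ) hμα ?_ ?_ hd.symm
    · rw [𝒞.rng_comp α' τ hlamτ, hμα']
    · rw [heq, 𝒞.assoc μ' α' τ hμα' hlamτ]
  subst hμ'_eq
  exact ⟨α', hα', hμα', rfl⟩

end IsKGraph

def UniqueFactorization (𝒞 : CatStruct C) (Λ G : Set C) : Prop :=
  ∀ x : C, ∃! p : C × C, p.1 ∈ Λ ∧ p.2 ∈ G ∧ 𝒞.src p.1 = 𝒞.rng p.2 ∧ x = 𝒞.comp p.1 p.2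

namespace UniqueFactorization

variable {Λ G : Set C}

theorem left_eq (hfact : 𝒞.UniqueFactorization Λ G) {a b g h : C} (ha : a ∈ Λ) (hb : b ∈ Λ)
    (hg : g ∈ G) (hh : h ∈ G) (hag : 𝒞.src a = 𝒞.rng g) (hbh : 𝒞.src b = 𝒞.rng h)
    (heq : 𝒞.comp a g = 𝒞.comp b h) : a = b :=
  congrArg Prod.fst ((hfact (𝒞.comp a g)).unique (y₁ := (a, g)) (y₂ := (b, h))
    ⟨ha, hg, hag, rfl⟩ ⟨hb, hh, hbh, heq⟩)

theorem exists_mem_ideal_comp (hfact : 𝒞.UniqueFactorization Λ G) {a x : C}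
    (hax : 𝒞.src a = 𝒞.rng x) :
    ∃ α ∈ Λ, ∃ g ∈ G, 𝒞.src a = 𝒞.rng α ∧ 𝒞.src α = 𝒞.rng g ∧
      𝒞.comp a x = 𝒞.comp (𝒞.comp a α) g := by
  obtain ⟨⟨α, g⟩, ⟨hα, hg, hαg, rfl⟩, -⟩ := hfact x
  rw [𝒞.rng_comp α g hαg] at hax
  exact ⟨α, hα, g, hg, hax, hαg, (𝒞.assoc a α g hax hαg).symm⟩

end UniqueFactorization

end CatStruct

namespace CatStruct

variable {C ι : Type*} {𝒞 : CatStruct C} {Λ G : Set C} {d : C → ι → ℕ}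

theorem idealIn_subset_ideal (a : C) : 𝒞.idealIn Λ a ⊆ 𝒞.ideal a :=
  fun _ ⟨c, _, hac, hx⟩ => ⟨c, hac, hx⟩

theorem mem_idealIn_of_mem_ideal (hΛ : 𝒞.IsKGraph Λ d) (hfact : 𝒞.UniqueFactorization Λ G)
    (hGsrc : ∀ x, 𝒞.src x ∈ G) {lam rho : C} (hlam : lam ∈ Λ) (hrho : rho ∈ Λ)
    (h : rho ∈ 𝒞.ideal lam) : rho ∈ 𝒞.idealIn Λ lam := by
  obtain ⟨x, hx, rfl⟩ := h
  obtain ⟨α, hα, g, hg, hlamα, hαg, heq⟩ := hfact.exists_mem_ideal_comp hx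
  -- `rho = (lam α) g` and `rho = rho · s(rho)` are both factorisations of `rho`
  refine ⟨α, hα, hlamα, (hfact.left_eq hrho (hΛ.comp_mem lam hlam α hα hlamα) (hGsrc _) hg
    (𝒞.rng_src _).symm (by rwa [𝒞.src_comp lam α hlamα]) ?_)⟩
  rw [𝒞.comp_src, heq]

theorem exists_mem_minimalCommonExtensions (hΛ : 𝒞.IsKGraph Λ d)
    (hfact : 𝒞.UniqueFactorization Λ G) {μ ν x : C} (hμ : μ ∈ Λ) (hν : ν ∈ Λ)
    (hxμ : x ∈ 𝒞.ideal μ) (hxν : x ∈ 𝒞.ideal ν) :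
    ∃ lam ∈ 𝒞.minimalCommonExtensions Λ d μ ν, x ∈ 𝒞.ideal lam := by
  obtain ⟨a, hμa, rfl⟩ := hxμ
  obtain ⟨α, hα, g, hg, hμα, hαg, hx⟩ := hfact.exists_mem_ideal_comp hμa
  obtain ⟨b, hνb, hxb⟩ := hxν
  obtain ⟨β, hβ, h, hh, hνβ, hβh, hx'⟩ := hfact.exists_mem_ideal_comp hνb
  have hμαΛ := hΛ.comp_mem μ hμ α hα hμα
  have hξ : 𝒞.comp μ α = 𝒞.comp ν β :=
    hfact.left_eq hμαΛ (hΛ.comp_mem ν hν β hβ hνβ) hg hh (by rwa [𝒞.src_comp μ α hμα])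
      (by rwa [𝒞.src_comp ν β hνβ]) (by rw [← hx, hxb, hx'])
  have hdμ := hΛ.degree_comp μ hμ α hα hμα
  have hdν := hΛ.degree_comp ν hν β hβ hνβ
  rw [hξ] at hdμ
  have hle : d μ ⊔ d ν ≤ d (𝒞.comp μ α) :=
    sup_le (hξ ▸ hdμ ▸ le_self_add) (hξ ▸ hdν ▸ le_self_add)
  obtain ⟨lam, hlam, τ, hτ, hlamτ, hξlam, hdlam⟩ := hΛ.exists_comp_of_le hμαΛ hle
  have hτg : 𝒞.src τ = 𝒞.rng g := by
    rw [← 𝒞.src_comp lam τ hlamτ, ← hξlam, 𝒞.src_comp μ α hμα, hαg]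
  refine ⟨lam, ⟨hlam, ?_, ?_, hdlam⟩, 𝒞.comp τ g, by rw [𝒞.rng_comp τ g hτg, hlamτ], ?_⟩
  · exact hΛ.mem_idealIn_of_comp_eq_comp hμ hα hlam hτ hμα hlamτ hξlam (hdlam ▸ le_sup_left)
  · exact hΛ.mem_idealIn_of_comp_eq_comp hν hβ hlam hτ hνβ hlamτ (hξ ▸ hξlam)
      (hdlam ▸ le_sup_right)
  · rw [hx, hξlam, 𝒞.assoc lam τ g hlamτ hτg]

theorem ideal_inter_ideal_eq_iUnion (hΛ : 𝒞.IsKGraph Λ d) (hfact : 𝒞.UniqueFactorization Λ G)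
    {μ ν : C} (hμ : μ ∈ Λ) (hν : ν ∈ Λ) :
    𝒞.ideal μ ∩ 𝒞.ideal ν = ⋃ lam ∈ 𝒞.minimalCommonExtensions Λ d μ ν, 𝒞.ideal lam := by
  refine Set.Subset.antisymm (fun x ⟨hxμ, hxν⟩ => ?_) (Set.iUnion₂_subset fun lam hlam => ?_)
  · obtain ⟨lam, hlam, hx⟩ := exists_mem_minimalCommonExtensions hΛ hfact hμ hν hxμ hxν
    exact Set.mem_biUnion hlam hx
  · exact Set.subset_inter (ideal_subset_of_mem (idealIn_subset_ideal μ hlam.2.1))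
      (ideal_subset_of_mem (idealIn_subset_ideal ν hlam.2.2.1))

theorem independent_minimalCommonExtensions (hΛ : 𝒞.IsKGraph Λ d)
    (hfact : 𝒞.UniqueFactorization Λ G) (hGsrc : ∀ x, 𝒞.src x ∈ G) (μ ν : C) :
    𝒞.Independent (𝒞.minimalCommonExtensions Λ d μ ν) := by
  intro lam hlam lam' hlam' hne hmem
  exact hne (hΛ.eq_of_mem_idealIn_of_degree_eq hlam'.1
    (mem_idealIn_of_mem_ideal hΛ hfact hGsrc hlam'.1 hlam.1 hmem)
    (hlam.2.2.2.trans hlam'.2.2.2.symm))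

theorem minimalCommonExtensions_finite
    (hrow : ∀ v, 𝒞.src v = v → ∀ n : ι → ℕ, {lam | lam ∈ Λ ∧ 𝒞.rng lam = v ∧ d lam = n}.Finite)
    (μ ν : C) : (𝒞.minimalCommonExtensions Λ d μ ν).Finite := by
  refine (hrow (𝒞.rng μ) (𝒞.src_rng μ) fun i => max (d μ i) (d ν i)).subset ?_
  rintro lam ⟨hlam, ⟨a, -, hμa, rfl⟩, -, hd⟩
  exact ⟨hlam, 𝒞.rng_comp μ a hμa, hd⟩

end CatStruct

section RangeRelation

variable {C ι A : Type*} {𝒞 : CatStruct C} {Λ G : Set C} {d : C → ι → ℕ} {S : C → A}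

theorem rangeProj_mul_eq_zero_of_degree_eq [NonUnitalNonAssocSemiring A] [Star A]
    (hΛ : 𝒞.IsKGraph Λ d)
    (hTCK3 : ∀ μ ∈ Λ, ∀ ν ∈ Λ, ∀ M : Finset C, ↑M = 𝒞.minimalCommonExtensions Λ d μ ν →
      rangeProj S μ * rangeProj S ν = ∑ lam ∈ M, rangeProj S lam)
    {lam lam' : C} (hlam : lam ∈ Λ) (hlam' : lam' ∈ Λ) (hd : d lam = d lam') (hne : lam ≠ lam') :
    rangeProj S lam * rangeProj S lam' = 0 := by
  have hempty : ((∅ : Finset C) : Set C) = 𝒞.minimalCommonExtensions Λ d lam lam' := by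
    rw [Finset.coe_empty, eq_comm]
    refine Set.eq_empty_of_forall_notMem fun rho hmce => hne ?_
    obtain ⟨-, hrho, hrho', hdrho⟩ := hmce
    have hdrho_lam : d rho = d lam := by rw [hdrho, ← hd]; exact sup_idem _
    exact (hΛ.eq_of_mem_idealIn_of_degree_eq hlam hrho hdrho_lam).symm.trans
      (hΛ.eq_of_mem_idealIn_of_degree_eq hlam' hrho' (hdrho_lam.trans hd))
  simpa using hTCK3 lam hlam lam' hlam' ∅ hempty

theorem IsTwistedRep.rangeProj_mul_eq_projJoin [Ring A] [StarRing A] {ω : C → C → A}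
    (hS : IsTwistedRep 𝒞 S ω)
    (hΛ : 𝒞.IsKGraph Λ d) (hfact : 𝒞.UniqueFactorization Λ G) (hGsrc : ∀ x, 𝒞.src x ∈ G)
    (hrow : ∀ v, 𝒞.src v = v → ∀ n : ι → ℕ, {lam | lam ∈ Λ ∧ 𝒞.rng lam = v ∧ d lam = n}.Finite)
    (hTCK3 : ∀ μ ∈ Λ, ∀ ν ∈ Λ, ∀ M : Finset C, ↑M = 𝒞.minimalCommonExtensions Λ d μ ν →
      rangeProj S μ * rangeProj S ν = ∑ lam ∈ M, rangeProj S lam)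
    (hPcomm : ∀ x y, Commute (rangeProj S x) (rangeProj S y)) {μ ν : C} (hμ : μ ∈ Λ)
    (hν : ν ∈ Λ) {F : Finset C} (hF : 𝒞.Independent F)
    (hU : 𝒞.ideal μ ∩ 𝒞.ideal ν = ⋃ c ∈ F, 𝒞.ideal c) :
    rangeProj S μ * rangeProj S ν = projJoin (rangeProj S) hPcomm F := by
  have hMfin := CatStruct.minimalCommonExtensions_finite hrow μ ν
  have hFM : ⋃ c ∈ (F : Set C), 𝒞.ideal c = ⋃ m ∈ (hMfin.toFinset : Set C), 𝒞.ideal m := by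
    rw [hMfin.coe_toFinset, ← CatStruct.ideal_inter_ideal_eq_iUnion hΛ hfact hμ hν, hU]
    rfl
  have hM : 𝒞.Independent (hMfin.toFinset : Set C) := by
    rw [hMfin.coe_toFinset]
    exact CatStruct.independent_minimalCommonExtensions hΛ hfact hGsrc μ ν
  have horth : ∀ c ∈ F, ∀ c' ∈ F, c ≠ c' → rangeProj S c * rangeProj S c' = 0 := by
    intro c hc c' hc' hne
    obtain ⟨m, hm, hcm⟩ := hF.exists_ideal_eq hFM hc
    obtain ⟨m', hm', hcm'⟩ := hF.exists_ideal_eq hFM hc'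
    rw [Finset.mem_coe, hMfin.mem_toFinset] at hm hm'
    rw [hS.rangeProj_eq_of_ideal_eq hcm, hS.rangeProj_eq_of_ideal_eq hcm']
    refine rangeProj_mul_eq_zero_of_degree_eq hΛ hTCK3 hm.1 hm'.1
      (hm.2.2.2.trans hm'.2.2.2.symm) ?_
    rintro rfl
    exact hne (hF.injOn_ideal hc hc' (hcm.trans hcm'.symm))
  rw [hTCK3 μ hμ ν hν _ hMfin.coe_toFinset, projJoin_eq_sum _ _ _ horth]
  exact (hF.sum_eq_sum hM hFM fun a b h => hS.rangeProj_eq_of_ideal_eq h).symm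

end RangeRelation

theorem tck3_implies_range_relation_general {k : ℕ} {X : Type*} (𝒳 : CatStruct X)
    (Λset Gset : Set X)
    (hΛunits : ∀ x : X, 𝒳.src x ∈ Λset ∧ 𝒳.rng x ∈ Λset)
    (hGunits : ∀ x : X, 𝒳.src x ∈ Gset ∧ 𝒳.rng x ∈ Gset)
    (hΛcomp : ∀ a ∈ Λset, ∀ b ∈ Λset, 𝒳.src a = 𝒳.rng b → 𝒳.comp a b ∈ Λset)
    (hfact : ∀ x : X, ∃! p : X × X, p.1 ∈ Λset ∧ p.2 ∈ Gset ∧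
      𝒳.src p.1 = 𝒳.rng p.2 ∧ x = 𝒳.comp p.1 p.2)
    (hG : ∀ g ∈ Gset, ∃ g' ∈ Gset, 𝒳.src g' = 𝒳.rng g ∧ 𝒳.rng g' = 𝒳.src g ∧
      𝒳.comp g g' = 𝒳.rng g ∧ 𝒳.comp g' g = 𝒳.src g)
    (d : X → Fin k → ℕ)
    (hd_comp : ∀ a ∈ Λset, ∀ b ∈ Λset, 𝒳.src a = 𝒳.rng b →
      d (𝒳.comp a b) = d a + d b)
    (hfactorΛ : ∀ lam ∈ Λset, ∀ m n : Fin k → ℕ, d lam = m + n →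
      ∃! p : X × X, p.1 ∈ Λset ∧ p.2 ∈ Λset ∧ 𝒳.src p.1 = 𝒳.rng p.2 ∧
        lam = 𝒳.comp p.1 p.2 ∧ d p.1 = m ∧ d p.2 = n)
    (hrow : ∀ v : X, 𝒳.src v = v → ∀ n : Fin k → ℕ,
      {lam | lam ∈ Λset ∧ 𝒳.rng lam = v ∧ d lam = n}.Finite ∧
      {lam | lam ∈ Λset ∧ 𝒳.rng lam = v ∧ d lam = n}.Nonempty)
    {A : Type*} [NormedRing A] [StarRing A]
    (S : X → A) (ω : X → X → A)
    (hsrc : ∀ c, star (S c) * S c = S (𝒳.src c))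
    (hcentral : ∀ c₁ c₂ (x : A), Commute (ω c₁ c₂) x)
    (hunitary : ∀ c₁ c₂, star (ω c₁ c₂) * ω c₁ c₂ = 1 ∧ ω c₁ c₂ * star (ω c₁ c₂) = 1)
    (hmul : ∀ c₁ c₂, 𝒳.src c₁ = 𝒳.rng c₂ →
      S c₁ * S c₂ = ω c₁ c₂ * S (𝒳.comp c₁ c₂))
    (hPcomm : ∀ x y : X, Commute (S x * star (S x)) (S y * star (S y)))
    (hTCK3 : ∀ μ ∈ Λset, ∀ ν ∈ Λset, ∀ M : Finset X,
      ↑M = {lam | lam ∈ Λset ∧ lam ∈ 𝒳.idealIn Λset μ ∧ lam ∈ 𝒳.idealIn Λset ν ∧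
        d lam = fun i => max (d μ i) (d ν i)} →
      S μ * star (S μ) * (S ν * star (S ν)) = ∑ lam ∈ M, S lam * star (S lam)) :
    (∀ c₁ c₂ : X, ∀ F : Finset X, 𝒳.Independent ↑F →
      𝒳.ideal c₁ ∩ 𝒳.ideal c₂ = (⋃ c ∈ F, 𝒳.ideal c) →
      S c₁ * star (S c₁) * (S c₂ * star (S c₂)) =
        projJoin (fun c => S c * star (S c)) hPcomm F) ∧
    (∀ lam ∈ Λset, ∀ g ∈ Gset, 𝒳.src lam = 𝒳.rng g →
      𝒳.ideal (𝒳.comp lam g) = 𝒳.ideal lam ∧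
      S (𝒳.comp lam g) * star (S (𝒳.comp lam g)) = S lam * star (S lam)) := by
  have hS : IsTwistedRep 𝒳 S ω := ⟨hsrc, hcentral, fun c₁ c₂ => (hunitary c₁ c₂).1, hmul⟩
  have hΛ : 𝒳.IsKGraph Λset d := ⟨fun x => (hΛunits x).1, hΛcomp, hd_comp, hfactorΛ⟩
  have hΛG : ∀ lam ∈ Λset, ∀ g ∈ Gset, 𝒳.src lam = 𝒳.rng g →
      𝒳.ideal (𝒳.comp lam g) = 𝒳.ideal lam ∧
      rangeProj S (𝒳.comp lam g) = rangeProj S lam := by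
    intro lam _ g hg hlamg
    obtain ⟨g', -, hg'⟩ := hG g hg
    have hideal := CatStruct.ideal_comp_of_isInvertible ⟨g', hg'⟩ hlamg
    exact ⟨hideal, hS.rangeProj_eq_of_ideal_eq hideal⟩
  refine ⟨fun c₁ c₂ F hF hU => ?_, hΛG⟩
  obtain ⟨⟨μ, g₁⟩, ⟨hμ, hg₁, hμg₁, rfl⟩, -⟩ := hfact c₁
  obtain ⟨⟨ν, g₂⟩, ⟨hν, hg₂, hνg₂, rfl⟩, -⟩ := hfact c₂
  obtain ⟨hI₁, hP₁⟩ := hΛG μ hμ g₁ hg₁ hμg₁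
  obtain ⟨hI₂, hP₂⟩ := hΛG ν hν g₂ hg₂ hνg₂
  rw [hI₁, hI₂] at hU
  change rangeProj S _ * rangeProj S _ = _
  rw [hP₁, hP₂]
  exact hS.rangeProj_mul_eq_projJoin hΛ hfact (fun x => (hGunits x).1)
    (fun v hv n => (hrow v hv n).1) hTCK3 hPcomm hμ hν hF hU

/-- for a self-similar action of a groupoid on a row-finite
`k`-graph with no sources (modelled as an ambient Zappa–Szép product `X` with
wide subcategories `Λset`, `Gset`), if `S` satisfies (TCK3) on `Λ` then it
satisfies the range relation (R3) on all of `C = Λ ⋈ G`; in particular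
`cC = λC` and `S_c S_c* = S_λ S_λ*` for `c = λg`. -/
theorem tck3_implies_range_relation {k : ℕ} {X : Type*} (𝒳 : CatStruct X)
    (Λset Gset : Set X)
    (hΛunits : ∀ x : X, 𝒳.src x ∈ Λset ∧ 𝒳.rng x ∈ Λset)
    (hGunits : ∀ x : X, 𝒳.src x ∈ Gset ∧ 𝒳.rng x ∈ Gset)
    (hΛcomp : ∀ a ∈ Λset, ∀ b ∈ Λset, 𝒳.src a = 𝒳.rng b → 𝒳.comp a b ∈ Λset)
    (hGcomp : ∀ a ∈ Gset, ∀ b ∈ Gset, 𝒳.src a = 𝒳.rng b → 𝒳.comp a b ∈ Gset)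
    (hfact : ∀ x : X, ∃! p : X × X, p.1 ∈ Λset ∧ p.2 ∈ Gset ∧
      𝒳.src p.1 = 𝒳.rng p.2 ∧ x = 𝒳.comp p.1 p.2)
    (hG : ∀ g ∈ Gset, ∃ g' ∈ Gset, 𝒳.src g' = 𝒳.rng g ∧ 𝒳.rng g' = 𝒳.src g ∧
      𝒳.comp g g' = 𝒳.rng g ∧ 𝒳.comp g' g = 𝒳.src g)
    (d : X → Fin k → ℕ)
    (hd_comp : ∀ a ∈ Λset, ∀ b ∈ Λset, 𝒳.src a = 𝒳.rng b →
      d (𝒳.comp a b) = d a + d b)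
    (hfactorΛ : ∀ lam ∈ Λset, ∀ m n : Fin k → ℕ, d lam = m + n →
      ∃! p : X × X, p.1 ∈ Λset ∧ p.2 ∈ Λset ∧ 𝒳.src p.1 = 𝒳.rng p.2 ∧
        lam = 𝒳.comp p.1 p.2 ∧ d p.1 = m ∧ d p.2 = n)
    (hdeg : ∀ g ∈ Gset, ∀ lam ∈ Λset, 𝒳.src g = 𝒳.rng lam →
      ∀ lam' ∈ Λset, ∀ g' ∈ Gset, 𝒳.src lam' = 𝒳.rng g' →
        𝒳.comp g lam = 𝒳.comp lam' g' → d lam' = d lam)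
    (hrow : ∀ v : X, 𝒳.src v = v → ∀ n : Fin k → ℕ,
      {lam | lam ∈ Λset ∧ 𝒳.rng lam = v ∧ d lam = n}.Finite ∧
      {lam | lam ∈ Λset ∧ 𝒳.rng lam = v ∧ d lam = n}.Nonempty)
    {A : Type*} [NormedRing A] [StarRing A] [CStarRing A]
    (S : X → A) (ω : X → X → A)
    (hsrc : ∀ c, star (S c) * S c = S (𝒳.src c))
    (hcentral : ∀ c₁ c₂ (x : A), Commute (ω c₁ c₂) x)
    (hunitary : ∀ c₁ c₂, star (ω c₁ c₂) * ω c₁ c₂ = 1 ∧ ω c₁ c₂ * star (ω c₁ c₂) = 1)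
    (hmul : ∀ c₁ c₂, 𝒳.src c₁ = 𝒳.rng c₂ →
      S c₁ * S c₂ = ω c₁ c₂ * S (𝒳.comp c₁ c₂))
    (hPcomm : ∀ x y : X, Commute (S x * star (S x)) (S y * star (S y)))
    (hTCK3 : ∀ μ ∈ Λset, ∀ ν ∈ Λset, ∀ M : Finset X,
      ↑M = {lam | lam ∈ Λset ∧ lam ∈ 𝒳.idealIn Λset μ ∧ lam ∈ 𝒳.idealIn Λset ν ∧
        d lam = fun i => max (d μ i) (d ν i)} →
      S μ * star (S μ) * (S ν * star (S ν)) = ∑ lam ∈ M, S lam * star (S lam)) :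
    (∀ c₁ c₂ : X, ∀ F : Finset X, 𝒳.Independent ↑F →
      𝒳.ideal c₁ ∩ 𝒳.ideal c₂ = (⋃ c ∈ F, 𝒳.ideal c) →
      S c₁ * star (S c₁) * (S c₂ * star (S c₂)) =
        projJoin (fun c => S c * star (S c)) hPcomm F) ∧
    (∀ lam ∈ Λset, ∀ g ∈ Gset, 𝒳.src lam = 𝒳.rng g →
      𝒳.ideal (𝒳.comp lam g) = 𝒳.ideal lam ∧
      S (𝒳.comp lam g) * star (S (𝒳.comp lam g)) = S lam * star (S lam)) :=
  tck3_implies_range_relation_general 𝒳 Λset Gset hΛunits hGunits hΛcomp hfact hG d hd_comp hfactorΛ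
    hrow S ω hsrc hcentral hunitary hmul hPcomm hTCK3
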